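/- arXiv:1808.09220 — 3 statements merged into one kernel-verified Lean document; each statement's English description precedes it below -/
import Mathlib

section
/- For every finite hypergraph H there exists a synchronous nonlocal game, with finite input set I, output set O of cardinality 3, and winning rule λ : I × I × O × O → Bool, such that for every unital C*-algebra A, the hypergraph H has a solution in A if and only if the game has a solution in A. -/
/-- A finite hypergraph: a finite vertex set `Fin n` together with a set of edges, each a
set of vertices, such that every vertex lies in some edge. -/
structure FinHypergraph where
  n : ℕ
  edges : Finset (Finset (Fin n))
  covers : ∀ v : Fin n, ∃ e ∈ edges, v ∈ e

/-- A projection in a `*`-ring: a self-adjoint idempotent. -/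
def IsProjection {A : Type*} [Ring A] [StarRing A] (a : A) : Prop :=
  IsSelfAdjoint a ∧ a * a = a

/-- A quantum representation of the hypergraph `H` on the Hilbert space `ℋ`: a family of
projections on `ℋ`, one for each vertex, summing to `1` over each edge. -/
def IsQuantumRep (H : FinHypergraph) (ℋ : Type*) [NormedAddCommGroup ℋ]
    [InnerProductSpace ℂ ℋ] [CompleteSpace ℋ] (p : Fin H.n → ℋ →L[ℂ] ℋ) : Prop :=
  (∀ v, IsProjection (p v)) ∧ ∀ e ∈ H.edges, ∑ v ∈ e, p v = 1

/-- The hypergraph `H` admits a quantum representation on some nonzero complex Hilbert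
space; equivalently, the free hypergraph C*-algebra `C*(H)` is nonzero. -/
def AdmitsQRep (H : FinHypergraph) : Prop :=
  ∃ (ℋ : Type) (i₁ : NormedAddCommGroup ℋ)
    (i₂ : @InnerProductSpace ℂ ℋ _ i₁.toSeminormedAddCommGroup) (i₃ : CompleteSpace ℋ),
    letI := i₁; letI := i₂; letI := i₃;
    Nontrivial ℋ ∧ ∃ p : Fin H.n → ℋ →L[ℂ] ℋ, IsQuantumRep H ℋ p

/-- A solution of the hypergraph `H` in a unital `*`-ring `A` (in particular, in a unital
C*-algebra): a family of projections indexed by the vertices, summing to `1` over each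
edge. -/
def IsSolution (H : FinHypergraph) (A : Type*) [Ring A] [StarRing A]
    (p : Fin H.n → A) : Prop :=
  (∀ v, IsProjection (p v)) ∧ ∀ e ∈ H.edges, ∑ v ∈ e, p v = 1

/-
A solution `p` of `H` yields a strategy: vertex `v` is measured by `(1 - p v, p v, 0)`, and for an
edge `e` and a position `i` the measurement `cut e i` has as outcomes the sums of `p` over the
vertices of `e` below, at and above `i`. These are projections because projections summing to `1`
in a C*-algebra are mutually orthogonal. For projection-valued strategies, the rule "never answer
`a ∈ S` to `x` together with `b ∉ T` to `y`, or vice versa" is equivalent to the linear relation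
`∑ a ∈ S, q x a = ∑ b ∈ T, q y b`. The game imposes relations saying that the partial sums along
each edge start at `0`, grow by one vertex at a time and end at `1`; conversely, for any solution
of the game these relations force `∑ v ∈ e, q (vertex v) eq = 1`.
-/

theorem Ordering.sum_univ {M : Type*} [AddCommMonoid M] (f : Ordering → M) :
    ∑ o, f o = f .lt + f .eq + f .gt := by
  rw [show (Finset.univ : Finset Ordering) = {.lt, .eq, .gt} from rfl,
    Finset.sum_insert (by decide), Finset.sum_pair (by decide), add_assoc]

namespace IsStarProjection

theorem sum {ι R : Type*} [NonUnitalNonAssocSemiring R] [StarRing R] {s : Finset ι} {p : ι → R}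
    (hp : ∀ i ∈ s, IsStarProjection (p i))
    (horth : (s : Set ι).Pairwise fun i j => p i * p j = 0) :
    IsStarProjection (∑ i ∈ s, p i) := by
  classical
  induction s using Finset.induction_on with
  | empty => simp
  | insert i s hi ih =>
    rw [Finset.sum_insert hi]
    refine (hp i (s.mem_insert_self i)).add (ih (fun j hj => hp j (Finset.mem_insert_of_mem hj))
      (horth.mono (by simp))) ?_
    rw [Finset.mul_sum]
    exact Finset.sum_eq_zero fun j hj =>
      horth (by simp) (by simp [hj]) (by rintro rfl; exact hi hj)

theorem mul_eq_zero_of_sum_eq_one {ι A : Type*} [CStarAlgebra A] {s : Finset ι} {p : ι → A}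
    (hp : ∀ i ∈ s, IsStarProjection (p i)) (hs : ∑ i ∈ s, p i = 1) :
    (s : Set ι).Pairwise fun i j => p i * p j = 0 := by
  classical
  let _ := CStarAlgebra.spectralOrder A
  have := CStarAlgebra.spectralOrderedRing A
  intro i hi j hj hij
  have hle : p i ≤ 1 - p j := by
    rw [← hs, ← Finset.sum_erase_eq_sub hj]
    exact Finset.single_le_sum (fun k hk => (hp k (Finset.mem_of_mem_erase hk)).nonneg)
      (Finset.mem_erase.2 ⟨hij, hi⟩)
  have := ((hp i hi).le_iff_mul_eq_left (hp j hj).one_sub).1 hle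
  rwa [mul_sub, mul_one, sub_eq_self] at this

end IsStarProjection

theorem isProjection_iff_isStarProjection {A : Type*} [Ring A] [StarRing A] {a : A} :
    IsProjection a ↔ IsStarProjection a :=
  ⟨fun h => ⟨h.2, h.1⟩, fun h => ⟨h.2, h.1⟩⟩

theorem sum_eq_sum_of_mul_eq_zero {O A : Type*} [Fintype O] [NonAssocSemiring A] {x y : O → A}
    (hx : ∑ a, x a = 1) (hy : ∑ b, y b = 1) {S T : Finset O}
    (h : ∀ a b, ¬(a ∈ S ↔ b ∈ T) → x a * y b = 0) :
    ∑ a ∈ S, x a = ∑ b ∈ T, y b :=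
  calc ∑ a ∈ S, x a = ∑ a ∈ S, ∑ b, x a * y b := by simp_rw [← Finset.mul_sum, hy, mul_one]
    _ = ∑ a ∈ S, ∑ b ∈ T, x a * y b := Finset.sum_congr rfl fun a ha =>
        (Finset.sum_subset (Finset.subset_univ T) fun b _ hb => h a b (by tauto)).symm
    _ = ∑ a, ∑ b ∈ T, x a * y b := Finset.sum_subset (Finset.subset_univ S) fun a _ ha =>
        Finset.sum_eq_zero fun b hb => h a b (by tauto)
    _ = ∑ b ∈ T, y b := by rw [Finset.sum_comm]; simp_rw [← Finset.sum_mul, hx, one_mul]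

structure IsPVM {O A : Type*} [Fintype O] [Ring A] [StarRing A] (x : O → A) : Prop where
  isStarProjection : ∀ a, IsStarProjection (x a)
  sum_eq_one : ∑ a, x a = 1

namespace IsPVM

variable {O A : Type*} [Fintype O] [CStarAlgebra A] {x y : O → A}

theorem mul_eq_zero (hx : IsPVM x) {a b : O} (hab : a ≠ b) : x a * x b = 0 :=
  IsStarProjection.mul_eq_zero_of_sum_eq_one (fun a _ => hx.isStarProjection a) hx.sum_eq_one
    (Finset.mem_coe.2 (Finset.mem_univ a)) (Finset.mem_coe.2 (Finset.mem_univ b)) hab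

theorem mul_sum [DecidableEq O] (hx : IsPVM x) (a : O) (S : Finset O) :
    x a * ∑ b ∈ S, x b = if a ∈ S then x a else 0 := by
  rw [Finset.mul_sum, ← Finset.sum_ite_eq S a x]
  refine Finset.sum_congr rfl fun b _ => ?_
  split_ifs with hab
  · rw [hab]; exact (hx.isStarProjection b).isIdempotentElem
  · exact hx.mul_eq_zero hab

theorem sum_mul [DecidableEq O] (hx : IsPVM x) (a : O) (S : Finset O) :
    (∑ b ∈ S, x b) * x a = if a ∈ S then x a else 0 := by
  rw [Finset.sum_mul, ← Finset.sum_ite_eq S a x]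
  refine Finset.sum_congr rfl fun b _ => ?_
  split_ifs with hab
  · rw [hab]; exact (hx.isStarProjection b).isIdempotentElem
  · exact hx.mul_eq_zero (Ne.symm hab)

theorem mul_eq_zero_of_sum_eq_sum (hx : IsPVM x) (hy : IsPVM y) {S T : Finset O}
    (h : ∑ a ∈ S, x a = ∑ b ∈ T, y b) {a b : O} (hab : ¬(a ∈ S ↔ b ∈ T)) : x a * y b = 0 := by
  classical
  have hS : x a * (∑ c ∈ S, x c) * y b = if a ∈ S then x a * y b else 0 := by
    rw [hx.mul_sum]; split_ifs <;> simp
  have hT : x a * (∑ c ∈ S, x c) * y b = if b ∈ T then x a * y b else 0 := by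
    rw [h, mul_assoc, hy.sum_mul]; split_ifs <;> simp
  by_cases ha : a ∈ S <;> by_cases hb : b ∈ T <;> simp_all

end IsPVM

open Classical in
noncomputable def constraintGame {I O : Type*} (E : I → Finset O → I → Finset O → Prop) :
    I × I × O × O → Bool :=
  fun ⟨x, y, a, b⟩ => decide (if x = y then a = b else ∀ S T, E x S y T → (a ∈ S ↔ b ∈ T))

section constraintGame

variable {I O : Type*} {E : I → Finset O → I → Finset O → Prop}

theorem constraintGame_self (x : I) (a b : O) : constraintGame E (x, x, a, b) = true ↔ a = b := by
  simp [constraintGame]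

theorem constraintGame_eq_false_of_ne {x y : I} (hxy : x ≠ y) {a b : O} :
    constraintGame E (x, y, a, b) = false ↔ ∃ S T, E x S y T ∧ ¬(a ∈ S ↔ b ∈ T) := by
  simp [constraintGame, hxy]

theorem constraintGame_orthogonal_iff [Fintype O] {A : Type*} [CStarAlgebra A]
    (hE : ∀ {x S y T}, E x S y T → x ≠ y) {q : I → O → A} (hq : ∀ x, IsPVM (q x)) :
    (∀ x y a b, constraintGame E (x, y, a, b) = false → q x a * q y b = 0) ↔
      ∀ x S y T, E x S y T → ∑ a ∈ S, q x a = ∑ b ∈ T, q y b := by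
  constructor
  · intro hq0 x S y T hxy
    exact sum_eq_sum_of_mul_eq_zero (hq x).sum_eq_one (hq y).sum_eq_one fun a b hab =>
      hq0 x y a b ((constraintGame_eq_false_of_ne (hE hxy)).2 ⟨S, T, hxy, hab⟩)
  · intro hsat x y a b hlose
    by_cases hxy : x = y
    · subst hxy
      exact (hq x).mul_eq_zero fun hab => by simp [constraintGame, hab] at hlose
    · obtain ⟨S, T, hxST, hab⟩ := (constraintGame_eq_false_of_ne hxy).1 hlose
      exact (hq x).mul_eq_zero_of_sum_eq_sum (hq y) (hsat x S y T hxST) hab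

end constraintGame

namespace FinHypergraph

variable (H : FinHypergraph)

-- `anchor` is a dummy input: the constraint `x S anchor ∅` says `∑ a ∈ S, q x a = 0`.
inductive GameInput
  | vertex (v : Fin H.n)
  | cut (e : H.edges) (i : Fin (H.n + 1))
  | anchor
  deriving DecidableEq, Fintype

inductive GameConstraint : H.GameInput → Finset Ordering → H.GameInput → Finset Ordering → Prop
  | start (e : H.edges) : GameConstraint (.cut e 0) {.lt} .anchor ∅
  | step (e : H.edges) (i : Fin H.n) :
      GameConstraint (.cut e i.succ) {.lt} (.cut e i.castSucc) {.lt, .eq}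
  | mem (e : H.edges) {v : Fin H.n} (hv : v ∈ e.1) :
      GameConstraint (.cut e v.castSucc) {.eq} (.vertex v) {.eq}
  | notMem (e : H.edges) {v : Fin H.n} (hv : v ∉ e.1) :
      GameConstraint (.cut e v.castSucc) {.eq} .anchor ∅
  | finish (e : H.edges) : GameConstraint (.cut e (Fin.last H.n)) {.eq, .gt} .anchor ∅

variable {H}

theorem GameConstraint.ne {x y : H.GameInput} {S T : Finset Ordering}
    (h : H.GameConstraint x S y T) : x ≠ y := by
  cases h <;> simp [Fin.ext_iff]

variable {A : Type*}

def strategy [Ring A] (p : Fin H.n → A) : H.GameInput → Ordering → A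
  | .vertex v, .lt => 1 - p v
  | .vertex v, .eq => p v
  | .vertex _, .gt => 0
  | .cut e i, o => ∑ v ∈ e.1 with compare v.val i.val = o, p v
  | .anchor, o => if o = .eq then 1 else 0

theorem strategy_cut_sum [Ring A] (p : Fin H.n → A) (e : H.edges) (i : Fin (H.n + 1))
    (T : Finset Ordering) :
    ∑ o ∈ T, strategy p (.cut e i) o = ∑ v ∈ e.1 with compare v.val i.val ∈ T, p v :=
  Finset.sum_fiberwise_eq_sum_filter _ _ _ _

theorem strategy_satisfies [Ring A] (p : Fin H.n → A) {x y : H.GameInput} {S T : Finset Ordering}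
    (h : H.GameConstraint x S y T) : ∑ a ∈ S, strategy p x a = ∑ b ∈ T, strategy p y b := by
  cases h with
  | start e =>
    rw [strategy_cut_sum, Finset.sum_empty]
    exact Finset.sum_eq_zero fun v hv => by simp [compare_lt_iff_lt] at hv
  | step e i =>
    rw [strategy_cut_sum, strategy_cut_sum]
    refine Finset.sum_congr (Finset.filter_congr fun v _ => ?_) fun _ _ => rfl
    simp only [Finset.mem_insert, Finset.mem_singleton, compare_lt_iff_lt, compare_eq_iff_eq,
      Fin.val_succ, Fin.val_castSucc]
    omega
  | mem e hv => rw [strategy_cut_sum]; simp [strategy, Fin.val_eq_val, Finset.filter_eq', hv]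
  | notMem e hv => rw [strategy_cut_sum]; simp [Fin.val_eq_val, Finset.filter_eq', hv]
  | finish e =>
    rw [strategy_cut_sum, Finset.sum_empty]
    exact Finset.sum_eq_zero fun v hv => by simp [compare_gt_iff_gt] at hv; omega

theorem isPVM_strategy [CStarAlgebra A] {p : Fin H.n → A} (hp : IsSolution H A p)
    (x : H.GameInput) : IsPVM (strategy p x) := by
  have hproj (v : Fin H.n) : IsStarProjection (p v) := isProjection_iff_isStarProjection.1 (hp.1 v)
  cases x with
  | vertex v =>
    refine ⟨fun o => ?_, ?_⟩
    · cases o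
      exacts [(hproj v).one_sub, hproj v, .zero A]
    · simp [Ordering.sum_univ, strategy]
  | cut e i =>
    have horth := IsStarProjection.mul_eq_zero_of_sum_eq_one (fun v _ => hproj v) (hp.2 e e.2)
    refine ⟨fun o => IsStarProjection.sum (fun v _ => hproj v) (horth.mono ?_), ?_⟩
    · exact Finset.coe_subset.2 (Finset.filter_subset _ _)
    · exact (Finset.sum_fiberwise _ _ _).trans (hp.2 e e.2)
  | anchor =>
    refine ⟨fun o => ?_, ?_⟩
    · cases o
      exacts [.zero A, .one A, .zero A]
    · simp [strategy]

theorem isSolution_of_satisfies [Ring A] [StarRing A] {q : H.GameInput → Ordering → A}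
    (hq : ∀ x, IsPVM (q x))
    (hsat : ∀ x S y T, H.GameConstraint x S y T → ∑ a ∈ S, q x a = ∑ b ∈ T, q y b) :
    IsSolution H A fun v => q (.vertex v) .eq := by
  set p : Fin H.n → A := fun v => q (.vertex v) .eq
  -- `q` and `strategy p` satisfy the same constraints, which determine the outcomes `lt` and `eq`
  -- of every `cut` recursively.
  have hcut_eq (e : H.edges) (v : Fin H.n) :
      q (.cut e v.castSucc) .eq = strategy p (.cut e v.castSucc) .eq := by
    by_cases hv : v ∈ e.1
    · simpa [p, strategy] using
        (hsat _ _ _ _ (.mem e hv)).trans (strategy_satisfies p (.mem e hv)).symm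
    · simpa using (hsat _ _ _ _ (.notMem e hv)).trans (strategy_satisfies p (.notMem e hv)).symm
  have hcut_lt (e : H.edges) (i : Fin (H.n + 1)) :
      q (.cut e i) .lt = strategy p (.cut e i) .lt := by
    induction i using Fin.induction with
    | zero => simpa using (hsat _ _ _ _ (.start e)).trans (strategy_satisfies p (.start e)).symm
    | succ i ih =>
      have hq := hsat _ _ _ _ (.step e i)
      have hs := strategy_satisfies p (.step e i)
      rw [Finset.sum_singleton, Finset.sum_pair (by decide)] at hq hs
      rw [hq, hs, ih, hcut_eq]
  refine ⟨fun v => isProjection_iff_isStarProjection.2 ((hq _).isStarProjection _), fun e he => ?_⟩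
  have hlast : q (.cut ⟨e, he⟩ (Fin.last H.n)) .eq + q (.cut ⟨e, he⟩ (Fin.last H.n)) .gt = 0 := by
    simpa [Finset.sum_pair] using hsat _ _ _ _ (.finish ⟨e, he⟩)
  have hone := (hq (.cut ⟨e, he⟩ (Fin.last H.n))).sum_eq_one
  rw [Ordering.sum_univ, add_assoc, hlast, add_zero, hcut_lt] at hone
  rw [← hone]
  exact Finset.sum_congr (Finset.filter_true_of_mem fun v _ => by simp [compare_lt_iff_lt]).symm
    fun _ _ => rfl

end FinHypergraph

/-- For every finite hypergraph `H` there is a synchronous nonlocal game, with finite input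
set `I`, output set `O` of cardinality `3`, and winning rule `lam`, such that for every
unital C*-algebra `A`, the hypergraph `H` has a solution in `A` if and only if the game has
a solution in `A` (a family of projections `q x a` with `∑ a, q x a = 1` for each input `x`
and `q x a * q y b = 0` whenever `lam (x, y, a, b) = false`). -/
theorem exists_synchronous_game_of_hypergraph (H : FinHypergraph) :
    ∃ (I O : Type) (fI : Fintype I) (fO : Fintype O) (lam : I × I × O × O → Bool),
      letI := fI; letI := fO;
      Fintype.card O = 3 ∧
      (∀ (x : I) (a b : O), lam (x, x, a, b) = true ↔ a = b) ∧
      ∀ (A : Type) [CStarAlgebra A],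
        (∃ p : Fin H.n → A, IsSolution H A p) ↔
        (∃ q : I → O → A, (∀ x a, IsProjection (q x a)) ∧ (∀ x, ∑ a, q x a = 1) ∧
          ∀ x y a b, lam (x, y, a, b) = false → q x a * q y b = 0) := by
  refine ⟨H.GameInput, Ordering, inferInstance, inferInstance, constraintGame H.GameConstraint,
    rfl, constraintGame_self, fun A _ => ?_⟩
  have hwin {q : H.GameInput → Ordering → A} (hq : ∀ x, IsPVM (q x)) :=
    constraintGame_orthogonal_iff (E := H.GameConstraint) (fun h => h.ne) hq
  simp only [isProjection_iff_isStarProjection]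
  constructor
  · rintro ⟨p, hp⟩
    have hq := FinHypergraph.isPVM_strategy hp
    exact ⟨_, fun x => (hq x).isStarProjection, fun x => (hq x).sum_eq_one,
      (hwin hq).2 fun _ _ _ _ => FinHypergraph.strategy_satisfies p⟩
  · rintro ⟨q, hproj, hsum, hq0⟩
    have hq x : IsPVM (q x) := ⟨hproj x, hsum x⟩
    exact ⟨_, FinHypergraph.isSolution_of_satisfies hq ((hwin hq).1 hq0)⟩
end

section
/- Let A be a unital C*-algebra, n a natural number, and (p_{ij})_{i,j ∈ Fin n} a matrix of projections in A. Then the matrix is formally unitary, i.e. ∑_{j} p_{ji}·p_{jk} = (if i = k then 1 else 0) for all i, k and ∑_{j} p_{ij}·p_{kj} = (if i = k then 1 else 0) for all i, k, if and only if every row and every column is a partition of unity, i.e. ∑_{j} p_{ij} = 1 for every i and ∑_{i} p_{ij} = 1 for every j. -/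
/-!
If projections `p k` sum to `1`, then `p j = ∑ k, p j * p k * p j = ∑ k, (p k * p j)⋆ * (p k * p j)`;
the `k = j` term is already `p j`, so the remaining terms are positive elements summing to `0`,
whence `p k * p j = 0` for `k ≠ j` by the C⋆-identity. Applied to every row and every column,
this gives the off-diagonal entries of `pᵀp` and `ppᵀ`; the diagonal ones are the column and row
sums because `p i j * p i j = p i j`.
-/

open Finset

section

variable {A : Type*} [NormedRing A] [StarRing A] [CStarRing A] [PartialOrder A]
  [StarOrderedRing A]

theorem IsProjection.mul_eq_zero_of_sum_eq_one {ι : Type*} [Fintype ι] [DecidableEq ι]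
    {p : ι → A} (hp : ∀ i, IsProjection (p i)) (hsum : ∑ i, p i = 1) {i j : ι} (hij : i ≠ j) :
    p i * p j = 0 := by
  have hsq : ∀ k, star (p k * p j) * (p k * p j) = p j * p k * p j := fun k => by
    rw [star_mul, (hp k).1.star_eq, (hp j).1.star_eq, mul_assoc, ← mul_assoc (p k), (hp k).2,
      mul_assoc]
  have htotal : ∑ k, star (p k * p j) * (p k * p j) = star (p j * p j) * (p j * p j) := by
    simp_rw [hsq]
    rw [← sum_mul, ← mul_sum, hsum, mul_one, (hp j).2, (hp j).2]
  rw [← add_sum_erase _ _ (mem_univ j), add_eq_left] at htotal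
  have hzero := (sum_eq_zero_iff_of_nonneg fun k _ => star_mul_self_nonneg (p k * p j)).mp
    htotal i (mem_erase.mpr ⟨hij, mem_univ i⟩)
  exact (CStarRing.star_mul_self_eq_zero_iff _).mp hzero

theorem sum_mul_eq_ite_of_sum_eq_one {ι κ : Type*} [Fintype ι] [Fintype κ] [DecidableEq ι]
    {q : κ → ι → A} (hq : ∀ j i, IsProjection (q j i)) (hrow : ∀ j, ∑ i, q j i = 1)
    (hcol : ∀ i, ∑ j, q j i = 1) (i k : ι) :
    ∑ j, q j i * q j k = if i = k then 1 else 0 := by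
  split_ifs with hik
  · subst hik
    simpa only [(hq _ i).2] using hcol i
  · exact sum_eq_zero fun j _ => IsProjection.mul_eq_zero_of_sum_eq_one (hq j) (hrow j) hik

end

/-- A matrix `(p i j)` of projections in a unital C*-algebra is formally unitary, i.e.
`∑ j, p j i * p j k = δ i k` and `∑ j, p i j * p k j = δ i k` for all `i, k`, if and only
if every row and every column is a partition of unity. -/
theorem formally_unitary_iff_rows_cols_partitions {A : Type*} [CStarAlgebra A] {n : ℕ}
    (p : Fin n → Fin n → A) (hp : ∀ i j, IsProjection (p i j)) :
    ((∀ i k, ∑ j, p j i * p j k = if i = k then (1 : A) else 0) ∧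
      (∀ i k, ∑ j, p i j * p k j = if i = k then (1 : A) else 0)) ↔
      ((∀ i, ∑ j, p i j = 1) ∧ (∀ j, ∑ i, p i j = 1)) := by
  let _ := CStarAlgebra.spectralOrder A
  have := CStarAlgebra.spectralOrderedRing A
  constructor
  · rintro ⟨hcols, hrows⟩
    refine ⟨fun i => ?_, fun j => ?_⟩
    · simpa only [(hp i _).2, if_pos] using hrows i i
    · simpa only [(hp _ j).2, if_pos] using hcols j j
  · rintro ⟨hrows, hcols⟩
    exact ⟨sum_mul_eq_ite_of_sum_eq_one hp hrows hcols,
      sum_mul_eq_ite_of_sum_eq_one (fun j i => hp i j) hcols hrows⟩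
end

section
/- Let A be a unital C*-algebra, n a natural number, and let R and R' be binary relations on Fin n (the adjacency relations of two directed graphs G and G' on n vertices, possibly with loops). Let (p_{ij})_{i,j ∈ Fin n} be projections in A satisfying ∑_{j} p_{ij} = 1 for every i and ∑_{i} p_{ij} = 1 for every j. Then the adjacency-commutation relations hold, i.e. for all i, j: ∑_{k : R k j} p_{ik} = ∑_{k : R' i k} p_{kj}, if and only if the orthogonality relations hold, i.e. for all i, j, k, l: if (R k j and not R' i l) or (not R k j and R' i l), then p_{ik}·p_{lj} = 0. -/
lemma sum_one_orth {A : Type*} [CStarAlgebra A] {n : ℕ} (q : Fin n → A)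
    (hq : ∀ i, IsProjection (q i)) (hsum : ∑ i, q i = 1) {i j : Fin n} (hij : i ≠ j) :
    q i * q j = 0 := by
  letI := CStarAlgebra.spectralOrder A
  letI := CStarAlgebra.spectralOrderedRing A
  have hpos : ∀ m, (0:A) ≤ q m := fun m => by
    calc (0:A) ≤ star (q m) * q m := star_mul_self_nonneg _
    _ = q m := by rw [(hq m).1.star_eq, (hq m).2]
  have hle : q j ≤ ∑ m ∈ Finset.univ.erase i, q m :=
    Finset.single_le_sum (fun m _ => hpos m)
      (Finset.mem_erase.mpr ⟨hij.symm, Finset.mem_univ j⟩)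
  have herase : ∑ m ∈ Finset.univ.erase i, q m = 1 - q i := by
    have h := Finset.add_sum_erase Finset.univ q (Finset.mem_univ i)
    rw [hsum] at h
    exact eq_sub_of_add_eq' h
  have key : q i * q j * q i = 0 := by
    have h1 : q i * q j * q i ≤ q i * (1 - q i) * q i := by
      have h := star_left_conjugate_le_conjugate hle (q i)
      rwa [(hq i).1.star_eq, herase] at h
    have h2 : q i * (1 - q i) * q i = 0 := by
      rw [mul_sub, mul_one, (hq i).2, sub_self, zero_mul]
    have h3 : (0:A) ≤ q i * q j * q i := by
      have heq : star (q j * q i) * (q j * q i) = q i * q j * q i := by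
        rw [star_mul, (hq i).1.star_eq, (hq j).1.star_eq]
        calc q i * q j * (q j * q i) = q i * (q j * q j) * q i := by noncomm_ring
        _ = q i * q j * q i := by rw [(hq j).2]
      rw [← heq]; exact star_mul_self_nonneg _
    exact le_antisymm (h2 ▸ h1) h3
  have hji : q j * q i = 0 := by
    have heq : star (q j * q i) * (q j * q i) = 0 := by
      rw [star_mul, (hq i).1.star_eq, (hq j).1.star_eq]
      calc q i * q j * (q j * q i) = q i * (q j * q j) * q i := by noncomm_ring
      _ = q i * q j * q i := by rw [(hq j).2]
      _ = 0 := key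
    exact CStarRing.star_mul_self_eq_zero_iff _ |>.mp heq
  calc q i * q j = star (q j * q i) := by rw [star_mul, (hq i).1.star_eq, (hq j).1.star_eq]
  _ = 0 := by rw [hji, star_zero]

/-- Let `R` and `R'` be the adjacency relations of two directed graphs `G, G'` on `Fin n`,
and let `(p i j)` be a matrix of projections in a unital C*-algebra whose rows and columns
are partitions of unity (the quantum permutation relations). Then the adjacency-commutation
relations `U * A_G = A_{G'} * U`, i.e. `∑ k adjacent to j in G, p i k = ∑ k with i
adjacent to k in G', p k j`, hold if and only if the orthogonality relations hold:
`p i k * p l j = 0` whenever (`R k j` and not `R' i l`) or (not `R k j` and `R' i l`). -/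
theorem adjacency_commutation_iff_orthogonality {A : Type*} [CStarAlgebra A] {n : ℕ}
    (R R' : Fin n → Fin n → Prop) [DecidableRel R] [DecidableRel R']
    (p : Fin n → Fin n → A) (hp : ∀ i j, IsProjection (p i j))
    (hrow : ∀ i, ∑ j, p i j = 1) (hcol : ∀ j, ∑ i, p i j = 1) :
    (∀ i j, ∑ k ∈ Finset.univ.filter (fun k => R k j), p i k =
        ∑ k ∈ Finset.univ.filter (fun k => R' i k), p k j) ↔
      (∀ i j k l, (R k j ∧ ¬ R' i l) ∨ (¬ R k j ∧ R' i l) → p i k * p l j = 0) := by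
  -- row and column orthogonality
  have hrowo : ∀ i {k k' : Fin n}, k ≠ k' → p i k * p i k' = 0 := fun i k k' h =>
    sum_one_orth (fun m => p i m) (fun m => hp i m) (hrow i) h
  have hcolo : ∀ j {l l' : Fin n}, l ≠ l' → p l j * p l' j = 0 := fun j l l' h =>
    sum_one_orth (fun m => p m j) (fun m => hp m j) (hcol j) h
  constructor
  · intro hcomm i j k l hcase
    set F := Finset.univ.filter (fun k => R k j) with hF
    set F' := Finset.univ.filter (fun k => R' i k) with hF'
    have hS : ∀ {k : Fin n}, k ∈ F → p i k * (∑ m ∈ F, p i m) = p i k := by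
      intro k hk
      rw [Finset.mul_sum]
      rw [Finset.sum_eq_single_of_mem k hk (fun m _ hm => hrowo i (Ne.symm hm))]
      exact (hp i k).2
    have hS0 : ∀ {k : Fin n}, k ∉ F → p i k * (∑ m ∈ F, p i m) = 0 := by
      intro k hk
      rw [Finset.mul_sum]
      exact Finset.sum_eq_zero (fun m hm => hrowo i (fun h => hk (h ▸ hm)))
    have hT : ∀ {l : Fin n}, l ∈ F' → (∑ m ∈ F', p m j) * p l j = p l j := by
      intro l hl
      rw [Finset.sum_mul]
      rw [Finset.sum_eq_single_of_mem l hl (fun m _ hm => hcolo j hm)]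
      exact (hp l j).2
    have hT0 : ∀ {l : Fin n}, l ∉ F' → (∑ m ∈ F', p m j) * p l j = 0 := by
      intro l hl
      rw [Finset.sum_mul]
      exact Finset.sum_eq_zero (fun m hm => hcolo j (fun h => hl (h ▸ hm)))
    rcases hcase with ⟨hkj, hil⟩ | ⟨hkj, hil⟩
    · have hkF : k ∈ F := by simp [hF, hkj]
      have hlF' : l ∉ F' := by simp [hF', hil]
      calc p i k * p l j = p i k * (∑ m ∈ F, p i m) * p l j := by rw [hS hkF]
      _ = p i k * ((∑ m ∈ F', p m j) * p l j) := by rw [hcomm i j, mul_assoc]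
      _ = 0 := by rw [hT0 hlF', mul_zero]
    · have hkF : k ∉ F := by simp [hF, hkj]
      have hlF' : l ∈ F' := by simp [hF', hil]
      calc p i k * p l j = p i k * ((∑ m ∈ F', p m j) * p l j) := by rw [hT hlF']
      _ = p i k * (∑ m ∈ F, p i m) * p l j := by rw [hcomm i j, mul_assoc]
      _ = 0 := by rw [hS0 hkF, zero_mul]
  · intro horth i j
    set F := Finset.univ.filter (fun k => R k j) with hF
    set F' := Finset.univ.filter (fun k => R' i k) with hF'
    have hLHS : ∑ k ∈ F, p i k = ∑ k ∈ F, ∑ l ∈ F', p i k * p l j := by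
      calc ∑ k ∈ F, p i k = ∑ k ∈ F, p i k * ∑ l, p l j := by rw [hcol j]; simp
      _ = ∑ k ∈ F, ∑ l, p i k * p l j := by simp [Finset.mul_sum]
      _ = ∑ k ∈ F, ∑ l ∈ F', p i k * p l j := by
          refine Finset.sum_congr rfl (fun k hk => ?_)
          have hkj : R k j := by simpa [hF] using hk
          refine (Finset.sum_subset (Finset.subset_univ F') (fun l _ hl => ?_)).symm
          have hil : ¬ R' i l := by simpa [hF'] using hl
          exact horth i j k l (Or.inl ⟨hkj, hil⟩)
    have hRHS : ∑ l ∈ F', p l j = ∑ k ∈ F, ∑ l ∈ F', p i k * p l j := by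
      calc ∑ l ∈ F', p l j = (∑ k, p i k) * ∑ l ∈ F', p l j := by rw [hrow i]; simp
      _ = ∑ k, ∑ l ∈ F', p i k * p l j := by rw [Finset.sum_mul]; simp [Finset.mul_sum]
      _ = ∑ k ∈ F, ∑ l ∈ F', p i k * p l j := by
          refine (Finset.sum_subset (Finset.subset_univ F) (fun k _ hk => ?_)).symm
          have hkj : ¬ R k j := by simpa [hF] using hk
          refine Finset.sum_eq_zero (fun l hl => ?_)
          have hil : R' i l := by simpa [hF'] using hl
          exact horth i j k l (Or.inr ⟨hkj, hil⟩)
    rw [hLHS, hRHS]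
end
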